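/- arXiv:2302.00533 — 6 statements merged into one kernel-verified Lean document; each statement's English description precedes it below -/
import Mathlib

section
/- Let $\gamma, \lambda \in [0,1)$ and let $\delta, z : \mathbb{N} \to \mathbb{R}$ be bounded sequences. For $t \in \mathbb{N}$ and $n \ge 1$ define $A_t^{(n)} = \delta_t + \sum_{l=1}^{n-1} \gamma^l (\delta_{t+l} - z_{t+l})$. Then the series below converge and $(1 - \lambda) \sum_{n=1}^{\infty} \lambda^{n-1} A_t^{(n)} = \delta_t + \sum_{l=1}^{\infty} (\gamma \lambda)^l (\delta_{t+l} - z_{t+l})$. -/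
/-!
Write `A_{n+1} = δ_t + B_n` with `B_n = ∑_{l=1}^{n} γ^l (δ_{t+l} - z_{t+l})`. The constant part
contributes `(1 - λ) δ_t ∑ λ^n = δ_t`, and summation by parts against the geometric weights,
`(1 - λ) ∑ λ^n B_n = ∑ λ^{n+1} (B_{n+1} - B_n)`, turns the remaining series into
`∑ (γλ)^{n+1} (δ_{t+n+1} - z_{t+n+1})`. All series converge because `B` is bounded, being a
partial sum of an absolutely convergent series.
-/

open Finset

theorem one_sub_mul_tsum_pow_mul_eq_tsum_pow_succ_mul_sub {R : Type*} [Ring R] [TopologicalSpace R]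
    [IsTopologicalRing R] [T2Space R] {r : R} {B : ℕ → R} (hB0 : B 0 = 0)
    (hB : Summable fun n => r ^ n * B n) :
    (1 - r) * ∑' n, r ^ n * B n = ∑' n, r ^ (n + 1) * (B (n + 1) - B n) := by
  have hshift : Summable fun n => r ^ (n + 1) * B (n + 1) := (summable_nat_add_iff 1).mpr hB
  have hmul : Summable fun n => r ^ (n + 1) * B n := by
    simpa only [pow_succ', mul_assoc] using hB.mul_left r
  calc (1 - r) * ∑' n, r ^ n * B n = ∑' n, r ^ n * B n - r * ∑' n, r ^ n * B n := by
        rw [sub_mul, one_mul]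
    _ = ∑' n, r ^ (n + 1) * B (n + 1) - ∑' n, r ^ (n + 1) * B n := by
        rw [← hB.tsum_mul_left, hB.tsum_eq_zero_add, hB0, mul_zero, zero_add]
        simp only [pow_succ', mul_assoc]
    _ = ∑' n, r ^ (n + 1) * (B (n + 1) - B n) := by
        rw [← hshift.tsum_sub hmul]
        simp only [mul_sub]

section NormedRing

variable {R : Type*} [NormedRing R] [NormOneClass R]

theorem summable_norm_pow_mul_of_norm_le {r : R} (hr : ‖r‖ < 1) {u : ℕ → R} {C : ℝ}
    (hu : ∀ n, ‖u n‖ ≤ C) : Summable fun n => ‖r ^ n * u n‖ :=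
  ((summable_geometric_of_lt_one (norm_nonneg r) hr).mul_right C).of_nonneg_of_le
    (fun _ => norm_nonneg _) fun n =>
      (norm_mul_le _ _).trans <|
        mul_le_mul (norm_pow_le r n) (hu n) (norm_nonneg _) (pow_nonneg (norm_nonneg r) n)

theorem summable_pow_mul_of_norm_le [CompleteSpace R] {r : R} (hr : ‖r‖ < 1) {u : ℕ → R} {C : ℝ}
    (hu : ∀ n, ‖u n‖ ≤ C) : Summable fun n => r ^ n * u n :=
  (summable_norm_pow_mul_of_norm_le hr hu).of_norm

end NormedRing

theorem norm_sum_le_tsum_norm {ι E : Type*} [SeminormedAddCommGroup E] {f : ι → E}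
    (hf : Summable fun i => ‖f i‖) (s : Finset ι) : ‖∑ i ∈ s, f i‖ ≤ ∑' i, ‖f i‖ :=
  (norm_sum_le s f).trans (hf.sum_le_tsum s fun i _ => norm_nonneg (f i))

section PartialSums

variable {R : Type*} [NormedCommRing R] [NormOneClass R] [CompleteSpace R] {γ r : R} {g : ℕ → R}
  {C : ℝ}

theorem summable_pow_mul_sum_Ico_pow_mul (hγ : ‖γ‖ < 1) (hr : ‖r‖ < 1) (hg : ∀ l, ‖g l‖ ≤ C) :
    Summable fun n => r ^ n * ∑ l ∈ Ico 1 (n + 1), γ ^ l * g l :=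
  summable_pow_mul_of_norm_le hr fun _ =>
    norm_sum_le_tsum_norm (summable_norm_pow_mul_of_norm_le hγ hg) _

theorem one_sub_mul_tsum_pow_mul_sum_Ico_pow_mul (hγ : ‖γ‖ < 1) (hr : ‖r‖ < 1)
    (hg : ∀ l, ‖g l‖ ≤ C) :
    (1 - r) * ∑' n, r ^ n * ∑ l ∈ Ico 1 (n + 1), γ ^ l * g l
      = ∑' l, (γ * r) ^ (l + 1) * g (l + 1) := by
  rw [one_sub_mul_tsum_pow_mul_eq_tsum_pow_succ_mul_sub (by simp)
    (summable_pow_mul_sum_Ico_pow_mul hγ hr hg)]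
  refine tsum_congr fun n => ?_
  rw [sum_Ico_succ_top (Nat.le_add_left 1 n), add_sub_cancel_left, mul_pow]
  ring

end PartialSums

/-- The unified advantage estimator as an exponentially-weighted average of n-step estimators:
for `γ, λ ∈ [0,1)` and bounded sequences `δ, z`, with
`A_t^{(n)} = δ_t + ∑_{l=1}^{n-1} γ^l (δ_{t+l} - z_{t+l})`, the series converge and
`(1 - λ) ∑_{n=1}^∞ λ^{n-1} A_t^{(n)} = δ_t + ∑_{l=1}^∞ (γλ)^l (δ_{t+l} - z_{t+l})`. -/
theorem stmt_5 (γ lam : ℝ) (hγ : γ ∈ Set.Ico (0 : ℝ) 1) (hlam : lam ∈ Set.Ico (0 : ℝ) 1)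
    (δ z : ℕ → ℝ) (hδ : ∃ C, ∀ n, |δ n| ≤ C) (hz : ∃ C, ∀ n, |z n| ≤ C) (t : ℕ)
    (A : ℕ → ℝ)
    (hA : ∀ n, A n = δ t + ∑ l ∈ Finset.Ico 1 n, γ ^ l * (δ (t + l) - z (t + l))) :
    Summable (fun n : ℕ => lam ^ n * A (n + 1)) ∧
      Summable (fun l : ℕ => (γ * lam) ^ (l + 1) * (δ (t + (l + 1)) - z (t + (l + 1)))) ∧
      (1 - lam) * ∑' n : ℕ, lam ^ n * A (n + 1)
        = δ t + ∑' l : ℕ, (γ * lam) ^ (l + 1) * (δ (t + (l + 1)) - z (t + (l + 1))) := by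
  obtain ⟨Cδ, hCδ⟩ := hδ
  obtain ⟨Cz, hCz⟩ := hz
  have hγ' : ‖γ‖ < 1 := (Real.norm_of_nonneg hγ.1).trans_lt hγ.2
  have hlam' : ‖lam‖ < 1 := (Real.norm_of_nonneg hlam.1).trans_lt hlam.2
  have hγlam : ‖γ * lam‖ < 1 :=
    (norm_mul γ lam).trans_lt (mul_lt_one_of_nonneg_of_lt_one_left (norm_nonneg γ) hγ' hlam'.le)
  have hg : ∀ l, ‖δ (t + l) - z (t + l)‖ ≤ Cδ + Cz :=
    fun l => (norm_sub_le _ _).trans (add_le_add (hCδ _) (hCz _))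
  have hsplit : ∀ n, lam ^ n * A (n + 1) = lam ^ n * δ t
      + lam ^ n * ∑ l ∈ Ico 1 (n + 1), γ ^ l * (δ (t + l) - z (t + l)) :=
    fun n => by rw [hA, mul_add]
  have hgeom : Summable fun n => lam ^ n * δ t :=
    (summable_geometric_of_lt_one hlam.1 hlam.2).mul_right (δ t)
  have hpartial := summable_pow_mul_sum_Ico_pow_mul hγ' hlam' hg
  refine ⟨(summable_congr hsplit).mpr (hgeom.add hpartial),
    (summable_nat_add_iff (f := fun l => (γ * lam) ^ l * (δ (t + l) - z (t + l))) 1).mpr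
      (summable_pow_mul_of_norm_le hγlam hg), ?_⟩
  rw [tsum_congr hsplit, hgeom.tsum_add hpartial, tsum_mul_right,
    tsum_geometric_of_lt_one hlam.1 hlam.2, mul_add,
    one_sub_mul_tsum_pow_mul_sum_Ico_pow_mul hγ' hlam' hg]
  field_simp [sub_ne_zero.mpr hlam.2.ne']
end

section
/- Let $\gamma, \lambda \in [0,1)$ and let $r, Q, b : \mathbb{N} \to \mathbb{R}$ be bounded sequences. Define $\delta_j^{Q} = r_j + \gamma Q_{j+1} - Q_j$, $\delta_j = r_j + \gamma Q_{j+1} - b_j$, $z_j = Q_j - b_j$, and the $\lambda$-return $G_t^{\lambda, Q} = Q_t + \sum_{n=0}^{\infty} (\gamma\lambda)^n \delta_{t+n}^{Q}$. Then for every $t$: $G_t^{\lambda, Q} - b_t = \delta_t + \sum_{l=1}^{\infty} (\gamma \lambda)^l (\delta_{t+l} - z_{t+l})$; i.e., the unified advantage estimator is a variance-reduced $\lambda$-return with arbitrary baseline $b$. -/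
/-!
Since `δ_j - z_j = r_j + γ Q_{j+1} - Q_j = δ_j^Q`, the baseline drops out of every term with
`l ≥ 1`, and the right-hand side is the λ-return with its `n = 0` term `Q_t + δ_t^Q - b_t = δ_t`
split off. Splitting off that term needs the series to converge, which holds because the
weights `(γλ)^n` are geometric and the residuals `δ^Q` are bounded.
-/

open Filter Asymptotics

lemma isBigO_one_of_abs_le {α : Type*} {l : Filter α} {f : α → ℝ} (h : ∃ C, ∀ x, |f x| ≤ C) :
    f =O[l] fun _ => (1 : ℝ) :=
  (isBigO_one_iff ℝ).2 (isBoundedUnder_of h)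

lemma summable_pow_mul_of_isBigO_one {q : ℝ} (hq : |q| < 1) {f : ℕ → ℝ}
    (hf : f =O[atTop] fun _ => (1 : ℝ)) : Summable fun n => q ^ n * f n :=
  summable_of_isBigO_nat (summable_geometric_of_abs_lt_one hq) <| by
    simpa using (isBigO_refl (fun n => q ^ n) atTop).mul hf

theorem stmt_7_general (γ lam : ℝ) (hγ : γ ∈ Set.Ico (0 : ℝ) 1) (hlam : lam ∈ Set.Ico (0 : ℝ) 1)
    (r Q b : ℕ → ℝ) (hr : ∃ C, ∀ n, |r n| ≤ C) (hQ : ∃ C, ∀ n, |Q n| ≤ C)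
    (t : ℕ) :
    (Q t + ∑' n : ℕ, (γ * lam) ^ n * (r (t + n) + γ * Q (t + n + 1) - Q (t + n))) - b t
      = (r t + γ * Q (t + 1) - b t) +
          ∑' l : ℕ, (γ * lam) ^ (l + 1) *
            ((r (t + (l + 1)) + γ * Q (t + (l + 1) + 1) - b (t + (l + 1)))
              - (Q (t + (l + 1)) - b (t + (l + 1)))) := by
  obtain ⟨Cr, hCr⟩ := hr
  obtain ⟨CQ, hCQ⟩ := hQ
  have hδQ : (fun n => r (t + n) + γ * Q (t + n + 1) - Q (t + n)) =O[atTop] fun _ => (1 : ℝ) :=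
    ((isBigO_one_of_abs_le ⟨Cr, fun n => hCr (t + n)⟩).add
      ((isBigO_one_of_abs_le ⟨CQ, fun n => hCQ (t + n + 1)⟩).const_mul_left γ)).sub
      (isBigO_one_of_abs_le ⟨CQ, fun n => hCQ (t + n)⟩)
  have hweight : |γ * lam| < 1 := by
    rw [abs_of_nonneg (mul_nonneg hγ.1 hlam.1)]
    exact mul_lt_one_of_nonneg_of_lt_one_left hγ.1 hγ.2 hlam.2.le
  simp only [sub_sub_sub_cancel_right]
  rw [(summable_pow_mul_of_isBigO_one hweight hδQ).tsum_eq_zero_add]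
  simp only [pow_zero, one_mul, Nat.add_zero]
  ring

/-- UAE as a variance-reduced λ-return: for `γ, λ ∈ [0,1)` and bounded sequences `r, Q, b`,
with `δ_j^Q = r_j + γ Q_{j+1} - Q_j`, `δ_j = r_j + γ Q_{j+1} - b_j`, `z_j = Q_j - b_j` and
`G_t^{λ,Q} = Q_t + ∑_{n=0}^∞ (γλ)^n δ_{t+n}^Q`, one has
`G_t^{λ,Q} - b_t = δ_t + ∑_{l=1}^∞ (γλ)^l (δ_{t+l} - z_{t+l})`. -/
theorem stmt_7 (γ lam : ℝ) (hγ : γ ∈ Set.Ico (0 : ℝ) 1) (hlam : lam ∈ Set.Ico (0 : ℝ) 1)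
    (r Q b : ℕ → ℝ) (hr : ∃ C, ∀ n, |r n| ≤ C) (hQ : ∃ C, ∀ n, |Q n| ≤ C)
    (hb : ∃ C, ∀ n, |b n| ≤ C) (t : ℕ) :
    (Q t + ∑' n : ℕ, (γ * lam) ^ n * (r (t + n) + γ * Q (t + n + 1) - Q (t + n))) - b t
      = (r t + γ * Q (t + 1) - b t) +
          ∑' l : ℕ, (γ * lam) ^ (l + 1) *
            ((r (t + (l + 1)) + γ * Q (t + (l + 1) + 1) - b (t + (l + 1)))
              - (Q (t + (l + 1)) - b (t + (l + 1)))) :=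
  stmt_7_general γ lam hγ hlam r Q b hr hQ t
end

section
/- Let $S$ and $A$ be measurable spaces, let $\pi, \tilde{\pi}$ be Markov kernels from $S$ to $A$, let $Q : S \times A \to \mathbb{R}$ be measurable with $\sup_{s,a} |Q(s,a)| \le M$, let $r : S \times A \to \mathbb{R}$ be measurable with $\sup_{s,a} |r(s,a)| \le K$, and let $\varepsilon > 0$. Define the baselines $b^{\pi}(s) = \int (1 + r(s,a)) Q(s,a) \, \pi(s)(da)$ and $b^{\tilde{\pi}}(s) = \int (1 + r(s,a)) Q(s,a) \, \tilde{\pi}(s)(da)$. If for every $s \in S$ the total variation distance between $\tilde{\pi}(s)$ and $\pi(s)$ is less than $\frac{\sqrt{\varepsilon}}{2}$, then for every probability measure $\nu$ on $S \times A$: $\int (Q(s,a) - b^{\tilde{\pi}}(s))^2 \, d\nu \le 2 \int (Q(s,a) - b^{\pi}(s))^2 \, d\nu + 2 \bigl( (K + 1) M \bigr)^2 \varepsilon$. -/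
open MeasureTheory

/-- Total variation distance between two measures, as the supremum over measurable sets of the
difference of the measures. -/
noncomputable def tvDist {S : Type*} [MeasurableSpace S] (μ ν : Measure S) : ℝ :=
  ⨆ E : {E : Set S // MeasurableSet E}, |(μ E).toReal - (ν E).toReal|

/-!
With `f = (1 + r) Q`, bounded by `C = (K + 1) M`, both baselines integrate the same function
`f(s, ·)` against `π(s)` and `π̃(s)`. Writing these integrals with the densities of `π(s)` and
`π̃(s)` with respect to `π(s) + π̃(s)`, their difference is at most `C` times the `L¹` distance of
the densities, which is at most `2 D_TV < √ε`. Hence `(b^π̃ - b^π)² ≤ C² ε` pointwise, and the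
claim follows by integrating `(Q - b^π̃)² ≤ 2 (Q - b^π)² + 2 (b^π - b^π̃)²` against `ν`.
-/

open ProbabilityTheory Set

section TotalVariation

variable {α : Type*} [MeasurableSpace α] (μ ν : Measure α) [IsFiniteMeasure μ] [IsFiniteMeasure ν]

lemma bddAbove_range_abs_measure_sub :
    BddAbove (range fun E : {E : Set α // MeasurableSet E} => |(μ E).toReal - (ν E).toReal|) := by
  refine ⟨μ.real univ + ν.real univ, ?_⟩
  rintro _ ⟨E, rfl⟩
  refine (abs_sub _ _).trans ?_
  simp only [abs_of_nonneg ENNReal.toReal_nonneg]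
  gcongr <;> exact measureReal_mono (subset_univ _)

lemma abs_measureReal_sub_le_tvDist {E : Set α} (hE : MeasurableSet E) :
    |μ.real E - ν.real E| ≤ tvDist μ ν :=
  le_ciSup (bddAbove_range_abs_measure_sub μ ν) ⟨E, hE⟩

lemma integral_abs_rnDeriv_sub_le_two_mul_tvDist :
    ∫ a, |(μ.rnDeriv (μ + ν) a).toReal - (ν.rnDeriv (μ + ν) a).toReal| ∂(μ + ν)
      ≤ 2 * tvDist μ ν := by
  set fμ := fun a => (μ.rnDeriv (μ + ν) a).toReal
  set fν := fun a => (ν.rnDeriv (μ + ν) a).toReal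
  have hfμ : Integrable fμ (μ + ν) := Measure.integrable_toReal_rnDeriv
  have hfν : Integrable fν (μ + ν) := Measure.integrable_toReal_rnDeriv
  have hΔ : Integrable (fun a => fμ a - fν a) (μ + ν) := hfμ.sub hfν
  have hμ : μ ≪ μ + ν := Measure.absolutelyContinuous_of_le (Measure.le_add_right le_rfl)
  have hν : ν ≪ μ + ν := Measure.absolutelyContinuous_of_le (Measure.le_add_left le_rfl)
  -- Hahn decomposition of `μ - ν`, read off the densities
  set E := {a | fν a ≤ fμ a}
  have hE : MeasurableSet E :=
    measurableSet_le (Measure.measurable_rnDeriv _ _).ennreal_toReal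
      (Measure.measurable_rnDeriv _ _).ennreal_toReal
  have hsplit : ∫ a, |fμ a - fν a| ∂(μ + ν)
      = (μ.real E - ν.real E) + (ν.real Eᶜ - μ.real Eᶜ) := by
    rw [← integral_add_compl hE hΔ.abs]
    congr 1
    · rw [setIntegral_congr_fun hE fun a ha => abs_of_nonneg (sub_nonneg.mpr ha),
        integral_sub hfμ.integrableOn hfν.integrableOn,
        Measure.setIntegral_toReal_rnDeriv hμ, Measure.setIntegral_toReal_rnDeriv hν]
    · rw [setIntegral_congr_fun hE.compl fun a (ha : ¬ fν a ≤ fμ a) =>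
          (abs_sub_comm _ _).trans (abs_of_nonneg (sub_nonneg.mpr (not_le.mp ha).le)),
        integral_sub hfν.integrableOn hfμ.integrableOn,
        Measure.setIntegral_toReal_rnDeriv hμ, Measure.setIntegral_toReal_rnDeriv hν]
  have h₁ := (le_abs_self _).trans (abs_measureReal_sub_le_tvDist μ ν hE)
  have h₂ := (neg_le_abs _).trans (abs_measureReal_sub_le_tvDist μ ν hE.compl)
  linarith

lemma abs_integral_sub_integral_le_mul_integral_abs_rnDeriv_sub {g : α → ℝ} (hg : Measurable g)
    {C : ℝ} (hC : ∀ a, |g a| ≤ C) :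
    |∫ a, g a ∂μ - ∫ a, g a ∂ν| ≤
      C * ∫ a, |(μ.rnDeriv (μ + ν) a).toReal - (ν.rnDeriv (μ + ν) a).toReal| ∂(μ + ν) := by
  set fμ := fun a => (μ.rnDeriv (μ + ν) a).toReal
  set fν := fun a => (ν.rnDeriv (μ + ν) a).toReal
  have hμ : μ ≪ μ + ν := Measure.absolutelyContinuous_of_le (Measure.le_add_right le_rfl)
  have hν : ν ≪ μ + ν := Measure.absolutelyContinuous_of_le (Measure.le_add_left le_rfl)
  have hgμ : Integrable g μ := .of_bound hg.aestronglyMeasurable C (ae_of_all _ hC)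
  have hgν : Integrable g ν := .of_bound hg.aestronglyMeasurable C (ae_of_all _ hC)
  have hΔ : Integrable (fun a => fμ a - fν a) (μ + ν) :=
    Measure.integrable_toReal_rnDeriv.sub Measure.integrable_toReal_rnDeriv
  have hdiff : ∫ a, g a ∂μ - ∫ a, g a ∂ν = ∫ a, (fμ a - fν a) * g a ∂(μ + ν) := by
    simp_rw [sub_mul]
    rw [integral_sub ((integrable_toReal_rnDeriv_mul_iff hμ).2 hgμ)
        ((integrable_toReal_rnDeriv_mul_iff hν).2 hgν),
      integral_toReal_rnDeriv_mul hμ, integral_toReal_rnDeriv_mul hν]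
  calc |∫ a, g a ∂μ - ∫ a, g a ∂ν| ≤ ∫ a, |(fμ a - fν a) * g a| ∂(μ + ν) := by
        rw [hdiff]; exact abs_integral_le_integral_abs
    _ ≤ ∫ a, C * |fμ a - fν a| ∂(μ + ν) := by
        refine integral_mono_of_nonneg (ae_of_all _ fun a => abs_nonneg _)
          (hΔ.abs.const_mul C) (ae_of_all _ fun a => ?_)
        dsimp only
        rw [abs_mul, mul_comm]
        exact mul_le_mul_of_nonneg_right (hC a) (abs_nonneg _)
    _ = C * ∫ a, |fμ a - fν a| ∂(μ + ν) := integral_const_mul C _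

end TotalVariation

section Baseline

variable {S A : Type*} [MeasurableSpace S] [MeasurableSpace A]

noncomputable def baseline (κ : Kernel S A) (f : S × A → ℝ) (s : S) : ℝ := ∫ a, f (s, a) ∂κ s

lemma measurable_baseline (κ : Kernel S A) [IsSFiniteKernel κ] {f : S × A → ℝ}
    (hf : Measurable f) : Measurable (baseline κ f) :=
  hf.stronglyMeasurable.integral_kernel_prod_right'.measurable

lemma abs_baseline_le (κ : Kernel S A) [IsMarkovKernel κ] {f : S × A → ℝ} {C : ℝ}
    (hC : ∀ x, |f x| ≤ C) (s : S) : |baseline κ f s| ≤ C := by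
  simpa [baseline] using norm_integral_le_of_norm_le_const (μ := κ s) (f := fun a => f (s, a))
    (ae_of_all _ fun a => hC (s, a))

lemma abs_baseline_sub_baseline_le (κ η : Kernel S A) [IsMarkovKernel κ] [IsMarkovKernel η]
    {f : S × A → ℝ} (hf : Measurable f) {C : ℝ} (hC : ∀ x, |f x| ≤ C) (s : S) :
    |baseline κ f s - baseline η f s| ≤ 2 * C * tvDist (κ s) (η s) := by
  obtain ⟨a⟩ := nonempty_of_isProbabilityMeasure (κ s)
  calc |baseline κ f s - baseline η f s|
      ≤ C * ∫ a, |((κ s).rnDeriv (κ s + η s) a).toReal - ((η s).rnDeriv (κ s + η s) a).toReal|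
          ∂(κ s + η s) :=
        abs_integral_sub_integral_le_mul_integral_abs_rnDeriv_sub _ _
          (hf.comp measurable_prodMk_left) fun a => hC (s, a)
    _ ≤ C * (2 * tvDist (κ s) (η s)) :=
        mul_le_mul_of_nonneg_left (integral_abs_rnDeriv_sub_le_two_mul_tvDist _ _)
          ((abs_nonneg _).trans (hC (s, a)))
    _ = 2 * C * tvDist (κ s) (η s) := by ring

lemma integrable_sq_sub_baseline (ν : Measure (S × A)) [IsFiniteMeasure ν] (κ : Kernel S A)
    [IsMarkovKernel κ] {Q f : S × A → ℝ} (hQ : Measurable Q) {M : ℝ} (hQM : ∀ x, |Q x| ≤ M)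
    (hf : Measurable f) {C : ℝ} (hfC : ∀ x, |f x| ≤ C) :
    Integrable (fun x => (Q x - baseline κ f x.1) ^ 2) ν := by
  have hm : Measurable fun x : S × A => (Q x - baseline κ f x.1) ^ 2 :=
    (hQ.sub ((measurable_baseline κ hf).comp measurable_fst)).pow_const 2
  refine .of_bound hm.aestronglyMeasurable ((M + C) ^ 2) (ae_of_all _ fun x => ?_)
  rw [Real.norm_eq_abs, abs_pow]
  exact pow_le_pow_left₀ (abs_nonneg _)
    ((abs_sub _ _).trans (add_le_add (hQM x) (abs_baseline_le κ hfC x.1))) 2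

end Baseline

lemma integral_sq_sub_le_two_mul_integral_sq_sub_add {X : Type*} [MeasurableSpace X]
    (ν : Measure X) [IsProbabilityMeasure ν] {u v w : X → ℝ} {δ : ℝ}
    (hv : Integrable (fun x => (u x - v x) ^ 2) ν) (hw : Integrable (fun x => (u x - w x) ^ 2) ν)
    (hvw : ∀ x, (w x - v x) ^ 2 ≤ δ) :
    ∫ x, (u x - w x) ^ 2 ∂ν ≤ 2 * ∫ x, (u x - v x) ^ 2 ∂ν + 2 * δ := by
  have hpt : ∀ x, (u x - w x) ^ 2 ≤ 2 * (u x - v x) ^ 2 + 2 * δ := fun x => calc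
    (u x - w x) ^ 2 = ((u x - v x) + (v x - w x)) ^ 2 := by ring
    _ ≤ 2 * ((u x - v x) ^ 2 + (v x - w x) ^ 2) := add_sq_le
    _ ≤ 2 * (u x - v x) ^ 2 + 2 * δ := by nlinarith [hvw x]
  calc ∫ x, (u x - w x) ^ 2 ∂ν ≤ ∫ x, (2 * (u x - v x) ^ 2 + 2 * δ) ∂ν :=
        integral_mono hw ((hv.const_mul 2).add (integrable_const _)) hpt
    _ = 2 * ∫ x, (u x - v x) ^ 2 ∂ν + 2 * δ := by
        rw [integral_add (hv.const_mul 2) (integrable_const _), integral_const_mul,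
          integral_const, probReal_univ, one_smul]

/-- Corollary 2: if the residual baseline `b^π(s) = ∫ (1 + r(s,a)) Q(s,a) π(s)(da)` is trained
for policy `π`, then for any successor policy `π̃` with `D_TV(π̃(s), π(s)) < √ε/2` for all `s`,
its squared-error objective under any distribution `ν` satisfies
`∫ (Q - b^{π̃})² dν ≤ 2 ∫ (Q - b^π)² dν + 2((K+1)M)² ε`. -/
theorem stmt_12 {S A : Type*} [MeasurableSpace S] [MeasurableSpace A]
    (π πt : ProbabilityTheory.Kernel S A)
    [ProbabilityTheory.IsMarkovKernel π] [ProbabilityTheory.IsMarkovKernel πt]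
    (Q : S × A → ℝ) (hQ_meas : Measurable Q) (M : ℝ) (hQ_bdd : ∀ x, |Q x| ≤ M)
    (r : S × A → ℝ) (hr_meas : Measurable r) (K : ℝ) (hr_bdd : ∀ x, |r x| ≤ K)
    (ε : ℝ) (hε : 0 < ε)
    (htv : ∀ s, tvDist (πt s) (π s) < Real.sqrt ε / 2)
    (ν : Measure (S × A)) [IsProbabilityMeasure ν] :
    (∫ x, (Q x - ∫ a, (1 + r (x.1, a)) * Q (x.1, a) ∂(πt x.1)) ^ 2 ∂ν)
      ≤ 2 * (∫ x, (Q x - ∫ a, (1 + r (x.1, a)) * Q (x.1, a) ∂(π x.1)) ^ 2 ∂ν)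
        + 2 * ((K + 1) * M) ^ 2 * ε := by
  set C := (K + 1) * M
  set f : S × A → ℝ := fun p => (1 + r p) * Q p
  have hf_meas : Measurable f := (measurable_const.add hr_meas).mul hQ_meas
  have hf_bdd : ∀ p, |f p| ≤ C := fun p => by
    have h₁ : |1 + r p| ≤ K + 1 := by
      rw [add_comm K]; exact (abs_add_le _ _).trans (by rw [abs_one]; gcongr; exact hr_bdd p)
    rw [abs_mul]; exact mul_le_mul h₁ (hQ_bdd p) (abs_nonneg _) ((abs_nonneg _).trans h₁)
  obtain ⟨x₀⟩ := nonempty_of_isProbabilityMeasure ν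
  have hC : 0 ≤ C := (abs_nonneg _).trans (hf_bdd x₀)
  have hclose : ∀ s, (baseline πt f s - baseline π f s) ^ 2 ≤ C ^ 2 * ε := fun s => by
    have h : |baseline πt f s - baseline π f s| ≤ C * √ε := calc
      _ ≤ 2 * C * tvDist (πt s) (π s) := abs_baseline_sub_baseline_le πt π hf_meas hf_bdd s
      _ ≤ 2 * C * (√ε / 2) := by gcongr; exact (htv s).le
      _ = C * √ε := by ring
    calc _ ≤ (C * √ε) ^ 2 := sq_le_sq' (abs_le.1 h).1 (abs_le.1 h).2
      _ = C ^ 2 * ε := by rw [mul_pow, Real.sq_sqrt hε.le]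
  change ∫ x, (Q x - baseline πt f x.1) ^ 2 ∂ν
    ≤ 2 * ∫ x, (Q x - baseline π f x.1) ^ 2 ∂ν + 2 * C ^ 2 * ε
  rw [mul_assoc 2 (C ^ 2)]
  exact integral_sq_sub_le_two_mul_integral_sq_sub_add ν
    (integrable_sq_sub_baseline ν π hQ_meas hQ_bdd hf_meas hf_bdd)
    (integrable_sq_sub_baseline ν πt hQ_meas hQ_bdd hf_meas hf_bdd) fun x => hclose x.1
end

section
/- Let $(\mathcal{A}, \mu)$ be a measure space with $\mu$ $\sigma$-finite, let $p, \tilde{p} : \mathcal{A} \to [0,\infty)$ be probability densities with respect to $\mu$, let $Q, Q_w : \mathcal{A} \to \mathbb{R}$ be measurable with $\sup_a |Q(a) - Q_w(a)| \le \Delta$ and $\sup_a |Q_w(a)| \le M$, and let $r : \mathcal{A} \to \mathbb{R}$ be measurable with $\sup_a |r(a)| \le K$. Define $b^{p} = \int p\,(1 + r)\, Q_w \, d\mu$ and $b^{\tilde{p}} = \int \tilde{p}\,(1 + r)\, Q_w \, d\mu$. If the total variation distance satisfies $\frac{1}{2}\int |\tilde{p} - p| \, d\mu \le \delta$, then $\bigl|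 \int \tilde{p}\,(Q - b^{p}) \, d\mu - \int \tilde{p}\,(Q_w - b^{\tilde{p}}) \, d\mu \bigr| \le \Delta + 2 (1 + K) M \delta$. -/
/-!
Since `p̃` integrates to one, the difference splits as `∫ p̃ (Q - Q_w) + (b^p̃ - b^p)`, and
`b^p̃ - b^p = ∫ (p̃ - p) (1 + r) Q_w`. Both are integrals of a bounded function against a
weight: the first is at most `Δ ∫ p̃ = Δ`, the second at most `(1 + K) M ∫ |p̃ - p| ≤ 2 (1 + K) M δ`.
-/

open MeasureTheory

section

variable {α : Type*} [MeasurableSpace α] {μ : Measure α}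

lemma MeasureTheory.Integrable.mul_of_abs_le {g f : α → ℝ} (hg : Integrable g μ)
    (hf : AEStronglyMeasurable f μ) {C : ℝ} (hC : ∀ a, |f a| ≤ C) :
    Integrable (fun a => g a * f a) μ :=
  hg.mul_bdd hf (ae_of_all _ hC)

lemma abs_integral_mul_le_of_abs_le {g f : α → ℝ} (hg : Integrable g μ)
    (hf : AEStronglyMeasurable f μ) {C : ℝ} (hC : ∀ a, |f a| ≤ C) :
    |∫ a, g a * f a ∂μ| ≤ C * ∫ a, |g a| ∂μ :=
  calc |∫ a, g a * f a ∂μ| ≤ ∫ a, |g a * f a| ∂μ := abs_integral_le_integral_abs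
    _ ≤ ∫ a, C * |g a| ∂μ := by
      refine integral_mono (hg.mul_of_abs_le hf hC).abs (hg.abs.const_mul C) fun a => ?_
      rw [abs_mul, mul_comm]
      exact mul_le_mul_of_nonneg_right (hC a) (abs_nonneg _)
    _ = C * ∫ a, |g a| ∂μ := integral_const_mul C _

lemma integral_mul_sub_const_of_integral_eq_one {q f : α → ℝ} (hq : ∫ a, q a ∂μ = 1)
    (hqf : Integrable (fun a => q a * f a) μ) (c : ℝ) :
    ∫ a, q a * (f a - c) ∂μ = ∫ a, q a * f a ∂μ - c := by
  have hq_int : Integrable q μ := .of_integral_ne_zero (by simp [hq])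
  simp_rw [mul_sub]
  rw [integral_sub hqf (hq_int.mul_const c), integral_mul_const, hq, one_mul]

lemma integral_mul_sub_sub_integral_mul_sub {q f g : α → ℝ} (hq : ∫ a, q a ∂μ = 1)
    (hqf : Integrable (fun a => q a * f a) μ) (hqg : Integrable (fun a => q a * g a) μ)
    (b b' : ℝ) :
    ∫ a, q a * (f a - b) ∂μ - ∫ a, q a * (g a - b') ∂μ
      = ∫ a, q a * (f a - g a) ∂μ + (b' - b) := by
  simp_rw [integral_mul_sub_const_of_integral_eq_one hq hqf,
    integral_mul_sub_const_of_integral_eq_one hq hqg, mul_sub, integral_sub hqf hqg]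
  ring

end

theorem stmt_16_general {α : Type*} [MeasurableSpace α] (μ : Measure α)
    (p ptilde : α → ℝ)
    (hpt_nonneg : ∀ a, 0 ≤ ptilde a)
    (hp_prob : (∫ a, p a ∂μ) = 1) (hpt_prob : (∫ a, ptilde a ∂μ) = 1)
    (Q Qw : α → ℝ) (hQ_meas : Measurable Q) (hQw_meas : Measurable Qw)
    (Δ : ℝ) (hΔ : ∀ a, |Q a - Qw a| ≤ Δ)
    (M : ℝ) (hM : ∀ a, |Qw a| ≤ M)
    (r : α → ℝ) (hr_meas : Measurable r) (K : ℝ) (hK : ∀ a, |r a| ≤ K)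
    (δ : ℝ) (htv : (1 / 2 : ℝ) * (∫ a, |ptilde a - p a| ∂μ) ≤ δ) :
    |(∫ a, ptilde a * (Q a - ∫ x, p x * (1 + r x) * Qw x ∂μ) ∂μ)
        - ∫ a, ptilde a * (Qw a - ∫ x, ptilde x * (1 + r x) * Qw x ∂μ) ∂μ|
      ≤ Δ + 2 * (1 + K) * M * δ := by
  have hp : Integrable p μ := .of_integral_ne_zero (by simp [hp_prob])
  have hpt : Integrable ptilde μ := .of_integral_ne_zero (by simp [hpt_prob])
  obtain ⟨a₀, -⟩ := exists_ne_zero_of_integral_ne_zero (μ := μ) (f := p) (by simp [hp_prob])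
  set h : α → ℝ := fun a => (1 + r a) * Qw a
  have hh_meas : AEStronglyMeasurable h μ :=
    ((measurable_const.add hr_meas).mul hQw_meas).aestronglyMeasurable
  have hh_bound : ∀ a, |h a| ≤ (1 + K) * M := fun a => by
    have h1r : |1 + r a| ≤ 1 + K := (abs_add_le _ _).trans (by simpa using hK a)
    rw [abs_mul]
    exact mul_le_mul h1r (hM a) (abs_nonneg _) ((abs_nonneg _).trans h1r)
  have hQ_bound : ∀ a, |Q a| ≤ Δ + M := fun a => by
    linarith [abs_sub_abs_le_abs_sub (Q a) (Qw a), hΔ a, hM a]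
  have hbaseline : ∫ x, ptilde x * (1 + r x) * Qw x ∂μ - ∫ x, p x * (1 + r x) * Qw x ∂μ
      = ∫ a, (ptilde a - p a) * h a ∂μ := by
    simp_rw [mul_assoc, sub_mul]
    exact (integral_sub (hpt.mul_of_abs_le hh_meas hh_bound)
      (hp.mul_of_abs_le hh_meas hh_bound)).symm
  have hcritic : |∫ a, ptilde a * (Q a - Qw a) ∂μ| ≤ Δ := by
    simpa [abs_of_nonneg (hpt_nonneg _), hpt_prob] using
      abs_integral_mul_le_of_abs_le hpt (hQ_meas.sub hQw_meas).aestronglyMeasurable hΔ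
  have hshift : |∫ a, (ptilde a - p a) * h a ∂μ| ≤ (1 + K) * M * (2 * δ) :=
    (abs_integral_mul_le_of_abs_le (g := fun a => ptilde a - p a) (hpt.sub hp) hh_meas hh_bound).trans
      (mul_le_mul_of_nonneg_left (by linarith) ((abs_nonneg _).trans (hh_bound a₀)))
  rw [integral_mul_sub_sub_integral_mul_sub hpt_prob
    (hpt.mul_of_abs_le hQ_meas.aestronglyMeasurable hQ_bound)
    (hpt.mul_of_abs_le hQw_meas.aestronglyMeasurable hM), hbaseline]
  calc _ ≤ _ := abs_add_le _ _
    _ ≤ Δ + (1 + K) * M * (2 * δ) := add_le_add hcritic hshift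
    _ = Δ + 2 * (1 + K) * M * δ := by ring

/-- First inner inequality in the bounded-bias theorem: for probability densities `p, p̃` with
total variation distance at most `δ`, critic error `|Q - Q_w| ≤ Δ`, `|Q_w| ≤ M`, residual
`|r| ≤ K`, and residual baselines `bᵖ = ∫ p (1+r) Q_w`, `bᵖ̃ = ∫ p̃ (1+r) Q_w`,
`|∫ p̃ (Q - bᵖ) - ∫ p̃ (Q_w - bᵖ̃)| ≤ Δ + 2(1+K)Mδ`. -/
theorem stmt_16 {α : Type*} [MeasurableSpace α] (μ : Measure α) [SigmaFinite μ]
    (p ptilde : α → ℝ) (hp_meas : Measurable p) (hpt_meas : Measurable ptilde)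
    (hp_nonneg : ∀ a, 0 ≤ p a) (hpt_nonneg : ∀ a, 0 ≤ ptilde a)
    (hp_prob : (∫ a, p a ∂μ) = 1) (hpt_prob : (∫ a, ptilde a ∂μ) = 1)
    (Q Qw : α → ℝ) (hQ_meas : Measurable Q) (hQw_meas : Measurable Qw)
    (Δ : ℝ) (hΔ : ∀ a, |Q a - Qw a| ≤ Δ)
    (M : ℝ) (hM : ∀ a, |Qw a| ≤ M)
    (r : α → ℝ) (hr_meas : Measurable r) (K : ℝ) (hK : ∀ a, |r a| ≤ K)
    (δ : ℝ) (htv : (1 / 2 : ℝ) * (∫ a, |ptilde a - p a| ∂μ) ≤ δ) :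
    |(∫ a, ptilde a * (Q a - ∫ x, p x * (1 + r x) * Qw x ∂μ) ∂μ)
        - ∫ a, ptilde a * (Qw a - ∫ x, ptilde x * (1 + r x) * Qw x ∂μ) ∂μ|
      ≤ Δ + 2 * (1 + K) * M * δ :=
  stmt_16_general μ p ptilde hpt_nonneg hp_prob hpt_prob Q Qw hQ_meas hQw_meas Δ hΔ M hM r hr_meas K
    hK δ htv
end

section
/- Let $S$ be a measurable space, let $\kappa$ and $\eta$ be Markov kernels from $S$ to $S$ such that the total variation distance between $\kappa(s)$ and $\eta(s)$ is at most $d$ for every $s \in S$, and let $\mu_0$ be a probability measure on $S$. Then for every $t \in \mathbb{N}$, the total variation distance between the $t$-step distributions $\mu_0 \kappa^{t}$ and $\mu_0 \eta^{t}$ (obtained by composing $\mu_0$ with $t$ iterates of the respective kernel) is at most $t \cdot d$; equivalently, $\|\mu_0 \kappa^{t} - \mu_0 \eta^{t}\|_1 \le 2 t d$. -/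
/-!
One step of the two chains adds at most `d` to the total variation distance `D`:
`D(κ ∘ₘ μ, η ∘ₘ ν) ≤ D(κ ∘ₘ μ, κ ∘ₘ ν) + D(κ ∘ₘ ν, η ∘ₘ ν) ≤ D(μ, ν) + d`.
The first term is the data-processing inequality, obtained by integrating `s ↦ κ s E ∈ [0, 1]`
against a Hahn decomposition of `μ - ν`; the second averages the pointwise bound `D(κ s, η s) ≤ d`
over `ν`. Induction on `t` gives `t * d`.
-/

open MeasureTheory ProbabilityTheory
open scoped ENNReal

/-- The `t`-step state distribution obtained by composing an initial distribution `μ0` with `t`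
iterates of the Markov kernel `κ`. -/
noncomputable def stepDist {S : Type*} [MeasurableSpace S]
    (κ : ProbabilityTheory.Kernel S S) (μ0 : Measure S) : ℕ → Measure S
  | 0 => μ0
  | (t + 1) => (stepDist κ μ0 t).bind κ

lemma ENNReal.le_add_ofReal_of_toReal_le {a b : ℝ≥0∞} {c : ℝ} (ha : a ≠ ∞)
    (h : a.toReal ≤ b.toReal + c) : a ≤ b + ENNReal.ofReal c := by
  rcases eq_or_ne b ∞ with rfl | hb
  · simp
  rw [← ENNReal.ofReal_toReal ha, ENNReal.ofReal_le_iff_le_toReal (by finiteness),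
    ENNReal.toReal_add hb ENNReal.ofReal_ne_top]
  exact h.trans (by gcongr; exact le_max_left _ _)

section TotalVariation

variable {S : Type*} [MeasurableSpace S] {μ ν ρ : Measure S}

lemma tvDist_nonneg (μ ν : Measure S) : 0 ≤ tvDist μ ν :=
  Real.iSup_nonneg fun _ => abs_nonneg _

lemma tvDist_comm (μ ν : Measure S) : tvDist μ ν = tvDist ν μ := by
  simp only [tvDist, abs_sub_comm]

@[simp]
lemma tvDist_self (μ : Measure S) : tvDist μ μ = 0 := by
  simp [tvDist]

lemma bddAbove_range_abs_toReal_sub [IsFiniteMeasure μ] [IsFiniteMeasure ν] :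
    BddAbove (Set.range fun E : {E : Set S // MeasurableSet E} =>
      |(μ E).toReal - (ν E).toReal|) := by
  refine ⟨(μ .univ).toReal + (ν .univ).toReal, ?_⟩
  rintro _ ⟨E, rfl⟩
  refine (abs_sub _ _).trans ?_
  simp only [ENNReal.abs_toReal]
  gcongr <;> first | finiteness | exact Set.subset_univ _

lemma abs_toReal_sub_le_tvDist [IsFiniteMeasure μ] [IsFiniteMeasure ν] {E : Set S}
    (hE : MeasurableSet E) : |(μ E).toReal - (ν E).toReal| ≤ tvDist μ ν :=
  le_ciSup bddAbove_range_abs_toReal_sub ⟨E, hE⟩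

lemma measure_le_add_tvDist [IsFiniteMeasure μ] [IsFiniteMeasure ν] {E : Set S}
    (hE : MeasurableSet E) : μ E ≤ ν E + ENNReal.ofReal (tvDist μ ν) :=
  ENNReal.le_add_ofReal_of_toReal_le (measure_ne_top μ E) <| by
    linarith [(le_abs_self _).trans (abs_toReal_sub_le_tvDist (μ := μ) (ν := ν) hE)]

lemma tvDist_le_of_forall_measure_le_add [IsFiniteMeasure μ] [IsFiniteMeasure ν] {c : ℝ}
    (hc : 0 ≤ c) (h : ∀ {E : Set S}, MeasurableSet E →
      μ E ≤ ν E + ENNReal.ofReal c ∧ ν E ≤ μ E + ENNReal.ofReal c) :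
    tvDist μ ν ≤ c := by
  have toReal_sub_le {a b : ℝ≥0∞} (hb : b ≠ ∞) (hab : a ≤ b + ENNReal.ofReal c) :
      a.toReal - b.toReal ≤ c := by
    have := ENNReal.toReal_le_add hab hb ENNReal.ofReal_ne_top
    rw [ENNReal.toReal_ofReal hc] at this
    linarith
  exact Real.iSup_le (fun ⟨E, hE⟩ => abs_sub_le_iff.2
    ⟨toReal_sub_le (measure_ne_top ν E) (h hE).1, toReal_sub_le (measure_ne_top μ E) (h hE).2⟩) hc

lemma tvDist_triangle [IsFiniteMeasure μ] [IsFiniteMeasure ν] [IsFiniteMeasure ρ] :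
    tvDist μ ρ ≤ tvDist μ ν + tvDist ν ρ :=
  Real.iSup_le (fun ⟨E, hE⟩ => (abs_sub_le _ ((ν E).toReal) _).trans <|
      add_le_add (abs_toReal_sub_le_tvDist hE) (abs_toReal_sub_le_tvDist hE))
    (add_nonneg (tvDist_nonneg μ ν) (tvDist_nonneg ν ρ))

end TotalVariation

section Kernel

variable {S T : Type*} [MeasurableSpace S] [MeasurableSpace T] {μ ν : Measure S}

lemma lintegral_le_lintegral_add_tvDist [IsFiniteMeasure μ] [IsFiniteMeasure ν] {f : S → ℝ≥0∞}
    (hf : ∀ s, f s ≤ 1) : ∫⁻ s, f s ∂μ ≤ ∫⁻ s, f s ∂ν + ENNReal.ofReal (tvDist μ ν) := by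
  obtain ⟨A, hA, hνμ, hμν⟩ := hahn_decomposition μ ν
  have hle_A : ν.restrict A ≤ μ.restrict A := Measure.le_iff.2 fun s hs => by
    simpa only [Measure.restrict_apply hs] using hνμ _ (hs.inter hA) Set.inter_subset_right
  have hle_Ac : μ.restrict Aᶜ ≤ ν.restrict Aᶜ := Measure.le_iff.2 fun s hs => by
    simpa only [Measure.restrict_apply hs] using hμν _ (hs.inter hA.compl) Set.inter_subset_right
  have on_A : ∫⁻ s in A, f s ∂μ ≤ ∫⁻ s in A, f s ∂ν + (μ A - ν A) :=
    calc ∫⁻ s in A, f s ∂μ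
        = ∫⁻ s, f s ∂(μ.restrict A - ν.restrict A) + ∫⁻ s in A, f s ∂ν := by
          rw [← lintegral_add_measure, Measure.sub_add_cancel_of_le hle_A]
      _ ≤ (μ.restrict A - ν.restrict A) .univ + ∫⁻ s in A, f s ∂ν := by
          gcongr
          simpa using lintegral_mono hf
      _ = ∫⁻ s in A, f s ∂ν + (μ A - ν A) := by
          rw [Measure.sub_apply .univ hle_A]
          simp [add_comm]
  calc ∫⁻ s, f s ∂μ = ∫⁻ s in A, f s ∂μ + ∫⁻ s in Aᶜ, f s ∂μ := (lintegral_add_compl f hA).symm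
    _ ≤ ∫⁻ s in A, f s ∂ν + (μ A - ν A) + ∫⁻ s in Aᶜ, f s ∂ν :=
        add_le_add on_A (lintegral_mono' hle_Ac le_rfl)
    _ = ∫⁻ s, f s ∂ν + (μ A - ν A) := by rw [add_right_comm, lintegral_add_compl f hA]
    _ ≤ ∫⁻ s, f s ∂ν + ENNReal.ofReal (tvDist μ ν) := by
        gcongr
        exact tsub_le_iff_left.2 (measure_le_add_tvDist hA)

lemma tvDist_comp_le_tvDist [IsFiniteMeasure μ] [IsFiniteMeasure ν] (κ : Kernel S T)
    [IsMarkovKernel κ] : tvDist (κ ∘ₘ μ) (κ ∘ₘ ν) ≤ tvDist μ ν := by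
  refine tvDist_le_of_forall_measure_le_add (tvDist_nonneg μ ν) fun hE => ?_
  simp only [Measure.bind_apply hE κ.aemeasurable]
  exact ⟨lintegral_le_lintegral_add_tvDist fun _ => prob_le_one,
    tvDist_comm μ ν ▸ lintegral_le_lintegral_add_tvDist fun _ => prob_le_one⟩

lemma comp_apply_le_add_of_forall_tvDist_le [IsProbabilityMeasure μ] {κ η : Kernel S T}
    [IsFiniteKernel κ] [IsFiniteKernel η] {d : ℝ} (h : ∀ s, tvDist (κ s) (η s) ≤ d)
    {E : Set T} (hE : MeasurableSet E) : (κ ∘ₘ μ) E ≤ (η ∘ₘ μ) E + ENNReal.ofReal d := by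
  rw [Measure.bind_apply hE κ.aemeasurable, Measure.bind_apply hE η.aemeasurable]
  calc ∫⁻ s, κ s E ∂μ ≤ ∫⁻ s, (η s E + ENNReal.ofReal d) ∂μ :=
        lintegral_mono fun s => (measure_le_add_tvDist hE).trans (by gcongr; exact h s)
    _ = ∫⁻ s, η s E ∂μ + ENNReal.ofReal d := by
        rw [lintegral_add_right _ measurable_const]
        simp

lemma tvDist_comp_le_of_forall_le [IsProbabilityMeasure μ] {κ η : Kernel S T}
    [IsFiniteKernel κ] [IsFiniteKernel η] {d : ℝ} (h : ∀ s, tvDist (κ s) (η s) ≤ d) :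
    tvDist (κ ∘ₘ μ) (η ∘ₘ μ) ≤ d := by
  obtain ⟨s⟩ := nonempty_of_isProbabilityMeasure μ
  have h' : ∀ s, tvDist (η s) (κ s) ≤ d := fun s => tvDist_comm (κ s) (η s) ▸ h s
  exact tvDist_le_of_forall_measure_le_add ((tvDist_nonneg _ _).trans (h s)) fun hE =>
    ⟨comp_apply_le_add_of_forall_tvDist_le h hE, comp_apply_le_add_of_forall_tvDist_le h' hE⟩

lemma tvDist_comp_comp_le [IsFiniteMeasure μ] [IsProbabilityMeasure ν] {κ η : Kernel S T}
    [IsMarkovKernel κ] [IsFiniteKernel η] {d : ℝ} (h : ∀ s, tvDist (κ s) (η s) ≤ d) :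
    tvDist (κ ∘ₘ μ) (η ∘ₘ ν) ≤ tvDist μ ν + d :=
  calc tvDist (κ ∘ₘ μ) (η ∘ₘ ν) ≤ tvDist (κ ∘ₘ μ) (κ ∘ₘ ν) + tvDist (κ ∘ₘ ν) (η ∘ₘ ν) :=
        tvDist_triangle
    _ ≤ tvDist μ ν + d := add_le_add (tvDist_comp_le_tvDist κ) (tvDist_comp_le_of_forall_le h)

end Kernel

instance stepDist.instIsProbabilityMeasure {S : Type*} [MeasurableSpace S] (κ : Kernel S S)
    [IsMarkovKernel κ] (μ0 : Measure S) [IsProbabilityMeasure μ0] (t : ℕ) :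
    IsProbabilityMeasure (stepDist κ μ0 t) := by
  induction t with
  | zero => exact ‹_›
  | succ t _ => exact inferInstanceAs (IsProbabilityMeasure (κ ∘ₘ stepDist κ μ0 t))

/-- State-distribution shift bound: if two Markov kernels `κ, η` on `S` satisfy
`D_TV(κ(s), η(s)) ≤ d` for every `s`, then for every initial distribution `μ0` and every `t`,
`D_TV(μ0 κᵗ, μ0 ηᵗ) ≤ t d`; equivalently `‖μ0 κᵗ - μ0 ηᵗ‖₁ ≤ 2 t d`. -/
theorem stmt_17 {S : Type*} [MeasurableSpace S]
    (κ η : ProbabilityTheory.Kernel S S)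
    [ProbabilityTheory.IsMarkovKernel κ] [ProbabilityTheory.IsMarkovKernel η]
    (d : ℝ) (htv : ∀ s, tvDist (κ s) (η s) ≤ d)
    (μ0 : Measure S) [IsProbabilityMeasure μ0] (t : ℕ) :
    tvDist (stepDist κ μ0 t) (stepDist η μ0 t) ≤ t * d ∧
      2 * tvDist (stepDist κ μ0 t) (stepDist η μ0 t) ≤ 2 * t * d := by
  have shift : tvDist (stepDist κ μ0 t) (stepDist η μ0 t) ≤ t * d := by
    induction t with
    | zero => simp [stepDist]
    | succ t ih =>
      calc tvDist (stepDist κ μ0 (t + 1)) (stepDist η μ0 (t + 1))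
          ≤ tvDist (stepDist κ μ0 t) (stepDist η μ0 t) + d := tvDist_comp_comp_le htv
        _ ≤ (t + 1 : ℕ) * d := by push_cast; linarith
  exact ⟨shift, by linarith⟩
end

section
/- Let $S$ be a measurable space, let $\kappa$ and $\eta$ be Markov kernels from $S$ to $S$ such that the total variation distance between $\kappa(s)$ and $\eta(s)$ is at most $d$ for every $s \in S$, let $\mu_0$ be a probability measure on $S$, let $\gamma \in [0,1)$, and let $f : S \to \mathbb{R}$ be bounded measurable with $\sup_s |f(s)| \le \Upsilon$. Then $\bigl| \sum_{t=0}^{\infty} \gamma^{t} \bigl( \int f \, d(\mu_0 \kappa^{t}) - \int f \, d(\mu_0 \eta^{t}) \bigr) \bigr| \le \frac{2 \gamma \Upsilon d}{(1 - \gamma)^{2}}$, where $\mu_0 \kappa^{t}$ denotes the composition of $\mu_0$ with $t$ iterates of $\kappa$. -/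
/-!
By the Hahn decomposition, the integrals of a function bounded by `C` against two probability
measures differ by at most `2 C · tvDist`. Pushing a test function `g` through one step of each
chain, the error after `t + 1` steps is at most the error after `t` steps for the function
`s ↦ ∫ g d(κ s)`, again bounded by `C`, plus the one-step gap `2 C d`. Hence the `t`-step error is
at most `2 C d t`, and summing against `γ ^ t` uses `∑ t γ ^ t = γ / (1 - γ) ^ 2`.
-/

open MeasureTheory

section

open ProbabilityTheory

variable {S : Type*} [MeasurableSpace S]

lemma integrable_of_abs_le {μ : Measure S} [IsFiniteMeasure μ] {g : S → ℝ} (hg : Measurable g)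
    {C : ℝ} (hC : ∀ s, |g s| ≤ C) : Integrable g μ :=
  .of_bound hg.aestronglyMeasurable C (.of_forall hC)

lemma abs_integral_le_of_abs_le {μ : Measure S} [IsProbabilityMeasure μ] {g : S → ℝ} {C : ℝ}
    (hC : ∀ s, |g s| ≤ C) : |∫ x, g x ∂μ| ≤ C := by
  simpa using norm_integral_le_of_norm_le_const (μ := μ) (f := g) (.of_forall hC)

section TotalVariation

variable {μ ν : Measure S}

lemma le_tvDist [IsProbabilityMeasure μ] [IsProbabilityMeasure ν] {E : Set S}
    (hE : MeasurableSet E) : |μ.real E - ν.real E| ≤ tvDist μ ν := by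
  refine le_ciSup (f := fun E : {E : Set S // MeasurableSet E} => |μ.real E - ν.real E|)
    ⟨1, ?_⟩ ⟨E, hE⟩
  rintro _ ⟨F, rfl⟩
  exact abs_sub_le_of_nonneg_of_le measureReal_nonneg measureReal_le_one measureReal_nonneg
    measureReal_le_one

lemma abs_integral_sub_le_of_le [IsFiniteMeasure μ] (hνμ : ν ≤ μ) {g : S → ℝ}
    (hg : Measurable g) {C : ℝ} (hC : ∀ s, |g s| ≤ C) :
    |∫ x, g x ∂μ - ∫ x, g x ∂ν| ≤ C * (μ.real Set.univ - ν.real Set.univ) := by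
  have : IsFiniteMeasure ν := isFiniteMeasure_of_le μ hνμ
  have hsplit : ∫ x, g x ∂μ = ∫ x, g x ∂(μ - ν) + ∫ x, g x ∂ν := by
    conv_lhs => rw [← Measure.sub_add_cancel_of_le hνμ]
    exact integral_add_measure (integrable_of_abs_le hg hC) (integrable_of_abs_le hg hC)
  have hmass : (μ - ν).real Set.univ = μ.real Set.univ - ν.real Set.univ := by
    simp only [measureReal_def, Measure.sub_apply MeasurableSet.univ hνμ]
    exact ENNReal.toReal_sub_of_le (hνμ Set.univ) (measure_ne_top μ _)
  rw [hsplit, add_sub_cancel_right, ← hmass]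
  exact norm_integral_le_of_norm_le_const (f := g) (.of_forall hC)

lemma abs_integral_sub_le_two_mul_tvDist [IsProbabilityMeasure μ] [IsProbabilityMeasure ν]
    {g : S → ℝ} (hg : Measurable g) {C : ℝ} (hC : ∀ s, |g s| ≤ C) :
    |∫ x, g x ∂μ - ∫ x, g x ∂ν| ≤ 2 * C * tvDist μ ν := by
  have hC0 : 0 ≤ C := (abs_nonneg _).trans (hC (nonempty_of_isProbabilityMeasure μ).some)
  obtain ⟨P, hP⟩ := exists_isHahnDecomposition ν μ
  have hon : |∫ x in P, g x ∂μ - ∫ x in P, g x ∂ν| ≤ C * tvDist μ ν := by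
    refine (abs_integral_sub_le_of_le hP.le_on hg hC).trans (mul_le_mul_of_nonneg_left ?_ hC0)
    simp only [measureReal_restrict_apply_univ]
    exact (le_abs_self _).trans (le_tvDist hP.measurableSet)
  have hoff : |∫ x in Pᶜ, g x ∂ν - ∫ x in Pᶜ, g x ∂μ| ≤ C * tvDist μ ν := by
    refine (abs_integral_sub_le_of_le hP.ge_on_compl hg hC).trans
      (mul_le_mul_of_nonneg_left ?_ hC0)
    simp only [measureReal_restrict_apply_univ]
    exact (le_abs_self _).trans ((abs_sub_comm _ _).trans_le (le_tvDist hP.measurableSet.compl))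
  rw [← integral_add_compl hP.measurableSet (integrable_of_abs_le (μ := μ) hg hC),
    ← integral_add_compl hP.measurableSet (integrable_of_abs_le (μ := ν) hg hC)]
  obtain ⟨hon₁, hon₂⟩ := abs_le.mp hon
  obtain ⟨hoff₁, hoff₂⟩ := abs_le.mp hoff
  rw [abs_le]
  constructor <;> linarith

end TotalVariation

lemma integral_bind {T E : Type*} [MeasurableSpace T] [NormedAddCommGroup E]
    [NormedSpace ℝ E] (μ : Measure S) [SFinite μ] (κ : Kernel S T) [IsSFiniteKernel κ]
    {g : T → E} (hg : Integrable g (μ.bind κ)) :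
    ∫ x, g x ∂(μ.bind κ) = ∫ s, ∫ x, g x ∂(κ s) ∂μ := by
  rw [Measure.comp_eq_comp_const_apply] at hg ⊢
  rw [Kernel.integral_comp hg, Kernel.const_apply]

instance isProbabilityMeasure_stepDist (κ : Kernel S S) [IsMarkovKernel κ] (μ0 : Measure S)
    [IsProbabilityMeasure μ0] (t : ℕ) : IsProbabilityMeasure (stepDist κ μ0 t) := by
  induction t with
  | zero => assumption
  | succ t ih => exact (inferInstance : IsProbabilityMeasure (κ ∘ₘ stepDist κ μ0 t))

section Kernels

variable {κ η : Kernel S S} [IsMarkovKernel κ] [IsMarkovKernel η] {d : ℝ}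

lemma abs_integral_bind_sub_le (htv : ∀ s, tvDist (κ s) (η s) ≤ d) {μ ν : Measure S}
    [IsProbabilityMeasure μ] [IsProbabilityMeasure ν] {g : S → ℝ} (hg : Measurable g) {C : ℝ}
    (hC : ∀ s, |g s| ≤ C) :
    |∫ x, g x ∂(μ.bind κ) - ∫ x, g x ∂(ν.bind η)| ≤
      |∫ s, ∫ x, g x ∂(κ s) ∂μ - ∫ s, ∫ x, g x ∂(κ s) ∂ν| + 2 * C * d := by
  have hC0 : 0 ≤ C := (abs_nonneg _).trans (hC (nonempty_of_isProbabilityMeasure μ).some)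
  have hκg : Measurable fun s => ∫ x, g x ∂(κ s) := hg.stronglyMeasurable.integral_kernel.measurable
  have hηg : Measurable fun s => ∫ x, g x ∂(η s) := hg.stronglyMeasurable.integral_kernel.measurable
  have hgap : ∀ s, |∫ x, g x ∂(κ s) - ∫ x, g x ∂(η s)| ≤ 2 * C * d := fun s =>
    (abs_integral_sub_le_two_mul_tvDist hg hC).trans (by gcongr; exact htv s)
  have hgap_int : |∫ s, ∫ x, g x ∂(κ s) ∂ν - ∫ s, ∫ x, g x ∂(η s) ∂ν| ≤ 2 * C * d := by
    rw [← integral_sub (integrable_of_abs_le hκg fun s => abs_integral_le_of_abs_le hC)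
      (integrable_of_abs_le hηg fun s => abs_integral_le_of_abs_le hC)]
    exact abs_integral_le_of_abs_le hgap
  rw [integral_bind μ κ (integrable_of_abs_le hg hC),
    integral_bind ν η (integrable_of_abs_le hg hC)]
  exact (abs_sub_le _ _ _).trans (by gcongr)

lemma abs_integral_stepDist_sub_le (htv : ∀ s, tvDist (κ s) (η s) ≤ d) (μ0 : Measure S)
    [IsProbabilityMeasure μ0] (t : ℕ) {g : S → ℝ} (hg : Measurable g) {C : ℝ}
    (hC : ∀ s, |g s| ≤ C) :
    |∫ x, g x ∂(stepDist κ μ0 t) - ∫ x, g x ∂(stepDist η μ0 t)| ≤ 2 * C * d * t := by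
  induction t generalizing g with
  | zero => simp [stepDist]
  | succ t ih =>
    have := ih hg.stronglyMeasurable.integral_kernel.measurable
      fun s => abs_integral_le_of_abs_le (μ := κ s) hC
    refine (abs_integral_bind_sub_le htv hg hC).trans ?_
    push_cast
    linarith

end Kernels

end

/-- Discounted-visitation gap bound: if two Markov kernels `κ, η` on `S` satisfy
`D_TV(κ(s), η(s)) ≤ d` for every `s`, and `|f| ≤ Υ` is bounded measurable, then
`|∑_{t=0}^∞ γᵗ (∫ f d(μ0 κᵗ) - ∫ f d(μ0 ηᵗ))| ≤ 2 γ Υ d / (1 - γ)²`. -/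
theorem stmt_18 {S : Type*} [MeasurableSpace S]
    (κ η : ProbabilityTheory.Kernel S S)
    [ProbabilityTheory.IsMarkovKernel κ] [ProbabilityTheory.IsMarkovKernel η]
    (d : ℝ) (htv : ∀ s, tvDist (κ s) (η s) ≤ d)
    (μ0 : Measure S) [IsProbabilityMeasure μ0]
    (γ : ℝ) (hγ : γ ∈ Set.Ico (0 : ℝ) 1)
    (f : S → ℝ) (hf_meas : Measurable f) (Υ : ℝ) (hf_bdd : ∀ s, |f s| ≤ Υ) :
    |∑' t : ℕ, γ ^ t * ((∫ s, f s ∂(stepDist κ μ0 t)) - ∫ s, f s ∂(stepDist η μ0 t))|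
      ≤ 2 * γ * Υ * d / (1 - γ) ^ 2 := by
  obtain ⟨hγ0, hγ1⟩ := hγ
  have hmoment := (hasSum_coe_mul_geometric_of_norm_lt_one
    (by rwa [Real.norm_of_nonneg hγ0] : ‖γ‖ < 1)).mul_left (2 * Υ * d)
  refine (tsum_of_norm_bounded (E := ℝ) hmoment fun t => ?_).trans_eq
    (by ring : 2 * Υ * d * (γ / (1 - γ) ^ 2) = 2 * γ * Υ * d / (1 - γ) ^ 2)
  rw [Real.norm_eq_abs, abs_mul, abs_of_nonneg (pow_nonneg hγ0 t)]
  calc γ ^ t * |(∫ s, f s ∂(stepDist κ μ0 t)) - ∫ s, f s ∂(stepDist η μ0 t)|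
      ≤ γ ^ t * (2 * Υ * d * t) := by
        gcongr
        exact abs_integral_stepDist_sub_le htv μ0 t hf_meas hf_bdd
    _ = 2 * Υ * d * (t * γ ^ t) := by ring
end
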